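/- Identify each word a_1a_2a_3a_4 ∈ W_2^4 with the integer 1 + Σ_{j=1}^4 (a_j − 1)·2^{j−1} ∈ {1,…,16}. Let A, B, J, G be the permutations of W_2^4 given in cycle notation by A = (1,9)(2,4,10,12,14,16)(6,8), B = (1,9)(2,4,6,10,16,12,14), J = (10,12) (the transposition exchanging the words 2112 and 2212), and G = (9,13,15) (the 3-cycle sending 1112 ↦ 1122 ↦ 1222 ↦ 1112). Then each of A, B, J and G satisfies both the diagonal condition and the annihilation condition. -/

import Mathlib

/-- For a permutation `σ` of words of length `k+1` over the alphabet `Fin n`, and a letter `i`,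
`fword σ i α` is the word `β` of length `k` such that `σ (β.m) = i.α` for some letter `m`,
i.e. the first `k` letters of `σ⁻¹ (i.α)`.  (The map `f_i^σ` of the paper.) -/
def fword {n k : ℕ} (σ : Equiv.Perm (Fin (k + 1) → Fin n)) (i : Fin n)
    (α : Fin k → Fin n) : Fin k → Fin n :=
  Fin.init (σ.symm (Fin.cons i α))

/-- The sets `Σ_m` associated to a family of maps `f_i : X → X`. -/
def SigmaSet {X : Type*} {n : ℕ} (f : Fin n → X → X) : ℕ → Set (X × X)
  | 0 => {p | p.1 = p.2}
  | m + 1 => SigmaSet f m ∪ {p | ∀ i, (f i p.1, f i p.2) ∈ SigmaSet f m}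

/-- The diagonal condition: `⋃ m, Σ_m = X × X` for the family `f_i^σ`. -/
def diagCond {n k : ℕ} (σ : Equiv.Perm (Fin (k + 1) → Fin n)) : Prop :=
  (⋃ m, SigmaSet (fword σ) m) = Set.univ

/-- The set `𝒲`: off-diagonal pairs of words of length `k`, together with a point `†` (`none`). -/
def OffDiag (n k : ℕ) := Option {q : (Fin k → Fin n) × (Fin k → Fin n) // q.1 ≠ q.2}

/-- The map `f_{ij}^σ` on `𝒲`: it sends `(α,β)` to `(γ,δ)` if `σ(γm) = iα` and `σ(δm) = jβ`
for some letter `m`, and to `†` otherwise; `†` is fixed. -/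
def fpair {n k : ℕ} (σ : Equiv.Perm (Fin (k + 1) → Fin n)) (i j : Fin n) :
    OffDiag n k → OffDiag n k
  | none => none
  | some ⟨(α, β), _⟩ =>
      if h : (σ.symm (Fin.cons i α)) (Fin.last k) = (σ.symm (Fin.cons j β)) (Fin.last k) ∧
          Fin.init (σ.symm (Fin.cons i α)) ≠ Fin.init (σ.symm (Fin.cons j β)) then
        some ⟨(Fin.init (σ.symm (Fin.cons i α)), Fin.init (σ.symm (Fin.cons j β))), h.2⟩
      else none

/-- The sets `Ψ_m` associated to a family of maps `g_j : Y → Y` and a point `†`. -/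
def PsiSet {Y ι : Type*} (dag : Y) (g : ι → Y → Y) : ℕ → Set Y
  | 0 => {dag}
  | m + 1 => {dag} ∪ {y | ∀ j, g j y ∈ PsiSet dag g m}

/-- The annihilation condition: `⋃ m, Ψ_m = 𝒲` for the family `f_{ij}^σ`. -/
def annCond {n k : ℕ} (σ : Equiv.Perm (Fin (k + 1) → Fin n)) : Prop :=
  (⋃ m, PsiSet (none : OffDiag n k) (fun ij : Fin n × Fin n => fpair σ ij.1 ij.2) m) = Set.univ

/-- The identification of a word `a₁a₂a₃a₄ ∈ W₂⁴` (a letter being an element of `Fin 2`,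
so `a_j - 1` corresponds to `(w j : ℕ)`) with the integer `1 + Σ_j (a_j - 1)·2^(j-1)`. -/
def enc (w : Fin (3 + 1) → Fin 2) : ℕ := 1 + ∑ j : Fin 4, (w j : ℕ) * 2 ^ (j : ℕ)

/-- The cycle `(1,9)(2,4,10,12,14,16)(6,8)` on `{1,…,16}`. -/
def cycA : ℕ → ℕ := fun N =>
  if N = 1 then 9 else if N = 9 then 1
  else if N = 2 then 4 else if N = 4 then 10 else if N = 10 then 12
  else if N = 12 then 14 else if N = 14 then 16 else if N = 16 then 2
  else if N = 6 then 8 else if N = 8 then 6 else N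

/-- The cycle `(1,9)(2,4,6,10,16,12,14)` on `{1,…,16}`. -/
def cycB : ℕ → ℕ := fun N =>
  if N = 1 then 9 else if N = 9 then 1
  else if N = 2 then 4 else if N = 4 then 6 else if N = 6 then 10
  else if N = 10 then 16 else if N = 16 then 12 else if N = 12 then 14
  else if N = 14 then 2 else N

/-- The transposition `(10,12)` on `{1,…,16}` (exchanging the words `2112` and `2212`). -/
def cycJ : ℕ → ℕ := fun N =>
  if N = 10 then 12 else if N = 12 then 10 else N

/-- The 3-cycle `(9,13,15)` on `{1,…,16}` (sending `1112 ↦ 1122 ↦ 1222 ↦ 1112`). -/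
def cycG : ℕ → ℕ := fun N =>
  if N = 9 then 13 else if N = 13 then 15 else if N = 15 then 9 else N

/-! Both conditions only involve the finitely many words of length 3, so they are settled by
evaluation: each permutation is built from its cycle notation on `Fin 16`, transported along
`finFunctionFinEquiv`, and for each condition one exhibits a stage `m` at which `Σ_m`
(resp. `Ψ_m`) is already everything. -/

instance {n k : ℕ} : DecidableEq (OffDiag n k) :=
  inferInstanceAs (DecidableEq (Option _))

instance {n k : ℕ} : Fintype (OffDiag n k) :=
  inferInstanceAs (Fintype (Option _))

/-- `annCond` writes `†` as `none`, whose type is `Option _` rather than `OffDiag n k`; instance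
search only finds `PsiSet.decidableMem` when `†` has the latter type. -/
def OffDiag.dagger {n k : ℕ} : OffDiag n k := none

instance SigmaSet.decidableMem {X : Type*} [DecidableEq X] {n : ℕ} (f : Fin n → X → X) :
    ∀ (m : ℕ) (p : X × X), Decidable (p ∈ SigmaSet f m)
  | 0, p => decidable_of_iff (p.1 = p.2) Iff.rfl
  | m + 1, p =>
      have := SigmaSet.decidableMem f m
      decidable_of_iff (p ∈ SigmaSet f m ∨ ∀ i, (f i p.1, f i p.2) ∈ SigmaSet f m) Iff.rfl

instance PsiSet.decidableMem {Y ι : Type*} [DecidableEq Y] [Fintype ι] (dag : Y)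
    (g : ι → Y → Y) : ∀ (m : ℕ) (y : Y), Decidable (y ∈ PsiSet dag g m)
  | 0, y => decidable_of_iff (y = dag) Iff.rfl
  | m + 1, y =>
      have := PsiSet.decidableMem dag g m
      decidable_of_iff (y = dag ∨ ∀ j, g j y ∈ PsiSet dag g m) Iff.rfl

theorem diagCond_of_forall_mem_sigmaSet {n k : ℕ} {σ : Equiv.Perm (Fin (k + 1) → Fin n)} (m : ℕ)
    (h : ∀ p, p ∈ SigmaSet (fword σ) m) : diagCond σ :=
  Set.eq_univ_of_forall fun p => Set.mem_iUnion.2 ⟨m, h p⟩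

theorem annCond_of_forall_mem_psiSet {n k : ℕ} {σ : Equiv.Perm (Fin (k + 1) → Fin n)} (m : ℕ)
    (h : ∀ y : OffDiag n k,
      y ∈ PsiSet OffDiag.dagger (fun ij : Fin n × Fin n => fpair σ ij.1 ij.2) m) :
    annCond σ :=
  Set.eq_univ_of_forall fun y => Set.mem_iUnion.2 ⟨m, h y⟩

theorem enc_injective : Function.Injective enc := fun w w' h =>
  finFunctionFinEquiv.injective <| Fin.ext <| by
    simpa only [enc, finFunctionFinEquiv_apply, Nat.add_left_cancel_iff] using h

theorem perm_eq_of_enc_apply_eq {σ τ : Equiv.Perm (Fin (3 + 1) → Fin 2)} {c : ℕ → ℕ}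
    (hσ : ∀ w, enc (σ w) = c (enc w)) (hτ : ∀ w, enc (τ w) = c (enc w)) : σ = τ :=
  Equiv.ext fun w => enc_injective ((hσ w).trans (hτ w).symm)

def wordPerm (c : Equiv.Perm (Fin 16)) : Equiv.Perm (Fin (3 + 1) → Fin 2) :=
  (finFunctionFinEquiv (m := 2) (n := 4)).symm.permCongr c

-- `enc = 1 + finFunctionFinEquiv`, so these cycles are the paper's shifted down by one.
def permA : Equiv.Perm (Fin (3 + 1) → Fin 2) :=
  wordPerm ([0, 8].formPerm * [1, 3, 9, 11, 13, 15].formPerm * [5, 7].formPerm)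

def permB : Equiv.Perm (Fin (3 + 1) → Fin 2) :=
  wordPerm ([0, 8].formPerm * [1, 3, 5, 9, 15, 11, 13].formPerm)

def permJ : Equiv.Perm (Fin (3 + 1) → Fin 2) := wordPerm [9, 11].formPerm

def permG : Equiv.Perm (Fin (3 + 1) → Fin 2) := wordPerm [8, 12, 14].formPerm

section Computations

set_option maxRecDepth 100000

theorem enc_permA : ∀ w, enc (permA w) = cycA (enc w) := by decide
theorem enc_permB : ∀ w, enc (permB w) = cycB (enc w) := by decide
theorem enc_permJ : ∀ w, enc (permJ w) = cycJ (enc w) := by decide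
theorem enc_permG : ∀ w, enc (permG w) = cycG (enc w) := by decide

theorem diagCond_permA : diagCond permA := diagCond_of_forall_mem_sigmaSet 4 (by decide)
theorem diagCond_permB : diagCond permB := diagCond_of_forall_mem_sigmaSet 4 (by decide)
theorem diagCond_permJ : diagCond permJ := diagCond_of_forall_mem_sigmaSet 5 (by decide)
theorem diagCond_permG : diagCond permG := diagCond_of_forall_mem_sigmaSet 6 (by decide)

theorem annCond_permA : annCond permA := annCond_of_forall_mem_psiSet 5 (by decide)
theorem annCond_permB : annCond permB := annCond_of_forall_mem_psiSet 5 (by decide)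
theorem annCond_permJ : annCond permJ := annCond_of_forall_mem_psiSet 4 (by decide)
theorem annCond_permG : annCond permG := annCond_of_forall_mem_psiSet 6 (by decide)

end Computations

/-- Each of the permutations `A`, `B`, `J`, `G` of `W₂⁴` satisfies both the diagonal condition
and the annihilation condition. -/
theorem stmt_17 (σ : Equiv.Perm (Fin (3 + 1) → Fin 2))
    (hσ : (∀ w, enc (σ w) = cycA (enc w)) ∨ (∀ w, enc (σ w) = cycB (enc w)) ∨
          (∀ w, enc (σ w) = cycJ (enc w)) ∨ (∀ w, enc (σ w) = cycG (enc w))) :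
    diagCond σ ∧ annCond σ := by
  rcases hσ with h | h | h | h
  · obtain rfl := perm_eq_of_enc_apply_eq h enc_permA
    exact ⟨diagCond_permA, annCond_permA⟩
  · obtain rfl := perm_eq_of_enc_apply_eq h enc_permB
    exact ⟨diagCond_permB, annCond_permB⟩
  · obtain rfl := perm_eq_of_enc_apply_eq h enc_permJ
    exact ⟨diagCond_permJ, annCond_permJ⟩
  · obtain rfl := perm_eq_of_enc_apply_eq h enc_permG
    exact ⟨diagCond_permG, annCond_permG⟩
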